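/- arXiv:2202.08038 — 3 statements merged into one kernel-verified Lean document; each statement's English description precedes it below -/
import Mathlib

section
/- Let T be a linear operator on a finite-dimensional complex vector space whose spectral radius is at most 1, and suppose every eigenvalue λ of T with |λ| = 1 is semisimple (its algebraic multiplicity equals its geometric multiplicity). Then the Cesàro means (1/n) ∑_{k=0}^{n-1} T^k converge as n → ∞ to the projection E₁ onto the eigenspace ker(T − I) along the sum of the other generalized eigenspaces. -/
open Filter Finset Module End Topology

/-!
Split `v` along the generalized eigenspaces of `T`; both sides are linear in `v`, so it suffices
to treat `v` with `(T - μ)^m v = 0`. If `‖μ‖ < 1`, expanding `T^k = (μ + (T - μ))^k` binomially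
gives `T^k v = ∑_{j<m} C(k,j) μ^(k-j) (T - μ)^j v → 0`, so the Cesàro means tend to `0` as well.
If `‖μ‖ = 1`, semisimplicity makes `v` an eigenvector: for `μ = 1` the means are constantly `v`,
otherwise they equal `n⁻¹ (μ^n - 1) / (μ - 1) • v`, which tends to `0`.
-/

theorem tendsto_apply_of_iSup_eq_top {ι α R M M₂ : Type*} [Semiring R] [AddCommMonoid M]
    [Module R M] [AddCommMonoid M₂] [Module R M₂] [TopologicalSpace M₂] [ContinuousAdd M₂]
    {l : Filter α} {p : ι → Submodule R M} (hp : ⨆ i, p i = ⊤) (A : α → M →ₗ[R] M₂)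
    (E : M →ₗ[R] M₂) (h : ∀ i, ∀ v ∈ p i, Tendsto (fun a ↦ A a v) l (𝓝 (E v))) (v : M) :
    Tendsto (fun a ↦ A a v) l (𝓝 (E v)) := by
  refine Submodule.iSup_induction p (motive := fun v ↦ Tendsto (fun a ↦ A a v) l (𝓝 (E v)))
    (hp ▸ Submodule.mem_top) h ?_ ?_
  · simpa using tendsto_const_nhds
  · intro x y hx hy
    simpa only [map_add] using hx.add hy

theorem tendsto_natCast_choose_mul_pow_sub {R : Type*} [NormedRing R] [HasSummableGeomSeries R]
    (j : ℕ) {μ : R} (hμ : ‖μ‖ < 1) :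
    Tendsto (fun k ↦ (k.choose j : R) * μ ^ (k - j)) atTop (𝓝 0) := by
  rw [← tendsto_add_atTop_iff_nat j]
  simpa using (summable_choose_mul_geometric_of_norm_lt_one j hμ).tendsto_atTop_zero

theorem Module.End.pow_apply_eq_sum_choose {R M : Type*} [CommRing R] [AddCommGroup M]
    [Module R M] (f : End R M) (μ : R) {m : ℕ} {v : M} (hv : ((f - μ • 1) ^ m) v = 0) (k : ℕ) :
    (f ^ k) v = ∑ j ∈ range m, ((k.choose j : R) * μ ^ (k - j)) • ((f - μ • 1) ^ j) v := by
  set N := f - μ • 1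
  have hbinom :
      (f ^ k) v = ∑ j ∈ range (k + 1), ((k.choose j : R) * μ ^ (k - j)) • (N ^ j) v := by
    rw [← sub_add_cancel f (μ • 1), ((Commute.one_right N).smul_right μ).add_pow,
      LinearMap.sum_apply]
    refine sum_congr rfl fun j _ ↦ ?_
    simp only [mul_apply, smul_pow, one_pow, LinearMap.smul_apply, one_apply, natCast_apply,
      map_nsmul, map_smul, mul_smul, Nat.cast_smul_eq_nsmul]
  -- both sums equal the one over `range (m + k + 1)`: the extra terms of the first vanish
  -- because `k.choose j = 0` for `j > k`, those of the second because `(f - μ • 1) ^ j v = 0`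
  refine hbinom.trans <| (sum_subset (range_subset_range.2 (by omega)) fun j _ hj ↦ ?_).trans
    (sum_subset (range_subset_range.2 (Nat.le_add_right m (k + 1))) fun j _ hj ↦ ?_).symm
  · rw [Nat.choose_eq_zero_of_lt (by simpa using hj), Nat.cast_zero, zero_mul, zero_smul]
  · rw [← Nat.sub_add_cancel (not_lt.1 (mem_range.not.1 hj)), pow_add, mul_apply, hv, map_zero,
      smul_zero]

theorem Module.End.tendsto_pow_apply_of_mem_maxGenEigenspace {𝕜 V : Type*} [NormedField 𝕜]
    [HasSummableGeomSeries 𝕜] [NormedAddCommGroup V] [NormedSpace 𝕜 V] (T : End 𝕜 V) {μ : 𝕜}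
    (hμ : ‖μ‖ < 1) {v : V} (hv : v ∈ T.maxGenEigenspace μ) :
    Tendsto (fun k ↦ (T ^ k) v) atTop (𝓝 0) := by
  obtain ⟨m, hm⟩ := (mem_maxGenEigenspace T μ v).mp hv
  simp_rw [T.pow_apply_eq_sum_choose μ hm]
  simpa using tendsto_finsetSum (range m) fun j _ ↦
    (tendsto_natCast_choose_mul_pow_sub j hμ).smul_const (((T - μ • 1) ^ j) v)

theorem tendsto_inv_natCast_mul_geom_sum {𝕜 : Type*} [RCLike 𝕜] {μ : 𝕜} (hμ : ‖μ‖ ≤ 1)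
    (hμ1 : μ ≠ 1) : Tendsto (fun n : ℕ ↦ (n : 𝕜)⁻¹ * ∑ k ∈ range n, μ ^ k) atTop (𝓝 0) := by
  have hbound (n : ℕ) : ‖(n : 𝕜)⁻¹ * ∑ k ∈ range n, μ ^ k‖ ≤ 2 / ‖μ - 1‖ * (n : ℝ)⁻¹ := by
    have : ‖μ ^ n - 1‖ ≤ 2 := by
      calc ‖μ ^ n - 1‖ ≤ ‖μ‖ ^ n + ‖(1 : 𝕜)‖ := by simpa using norm_sub_le (μ ^ n) 1
        _ ≤ 2 := by linarith [norm_one (α := 𝕜), pow_le_one₀ (n := n) (norm_nonneg μ) hμ]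
    rw [geom_sum_eq hμ1, norm_mul, norm_div, norm_inv, RCLike.norm_natCast, mul_comm]
    gcongr
  exact squeeze_zero_norm hbound <| by
    simpa using tendsto_inv_atTop_nhds_zero_nat.const_mul (2 / ‖μ - 1‖)

noncomputable def Module.End.cesaroMean {𝕜 M : Type*} [Field 𝕜] [AddCommGroup M] [Module 𝕜 M]
    (f : End 𝕜 M) (n : ℕ) : End 𝕜 M :=
  (n : 𝕜)⁻¹ • ∑ k ∈ range n, f ^ k

theorem Module.End.cesaroMean_apply {𝕜 M : Type*} [Field 𝕜] [AddCommGroup M] [Module 𝕜 M]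
    (f : End 𝕜 M) (n : ℕ) (v : M) :
    f.cesaroMean n v = (n : 𝕜)⁻¹ • ∑ k ∈ range n, (f ^ k) v := by
  simp [cesaroMean]

section Cesaro

variable {𝕜 V : Type*} [RCLike 𝕜] [NormedAddCommGroup V] [NormedSpace 𝕜 V]

theorem Module.End.tendsto_cesaroMean_apply {T : End 𝕜 V} {v x : V}
    (h : Tendsto (fun k ↦ (T ^ k) v) atTop (𝓝 x)) :
    Tendsto (fun n ↦ T.cesaroMean n v) atTop (𝓝 x) := by
  let := NormedSpace.restrictScalars ℝ 𝕜 V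
  simpa only [cesaroMean_apply, inv_natCast_smul_eq 𝕜 ℝ] using h.cesaro_smul

theorem Module.End.HasEigenvector.tendsto_cesaroMean_apply {T : End 𝕜 V} {μ : 𝕜} {v : V}
    (hv : T.HasEigenvector μ v) (hμ : ‖μ‖ ≤ 1) (hμ1 : μ ≠ 1) :
    Tendsto (fun n ↦ T.cesaroMean n v) atTop (𝓝 0) := by
  simpa [cesaroMean_apply, hv.pow_apply, ← sum_smul, smul_smul] using
    (tendsto_inv_natCast_mul_geom_sum hμ hμ1).smul_const v

end Cesaro

/-- Mean ergodic theorem: if all eigenvalues of `T` lie in the closed unit disk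
and the peripheral ones are semisimple, the Cesàro means of the powers of `T`
converge to the spectral projection onto `ker (T - 1)` along the other
generalized eigenspaces. -/
theorem stmt_4 {V : Type*} [NormedAddCommGroup V] [NormedSpace ℂ V]
    [FiniteDimensional ℂ V] (T : V →ₗ[ℂ] V)
    (hdisk : ∀ μ : ℂ, Module.End.HasEigenvalue T μ → ‖μ‖ ≤ 1)
    (hss : ∀ μ : ℂ, ‖μ‖ = 1 →
      Module.End.maxGenEigenspace T μ = Module.End.eigenspace T μ)
    (E : V →ₗ[ℂ] V)
    (hE1 : ∀ v ∈ Module.End.eigenspace T 1, E v = v)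
    (hE0 : ∀ μ : ℂ, μ ≠ 1 → ∀ v ∈ Module.End.maxGenEigenspace T μ, E v = 0) :
    ∀ v : V, Tendsto (fun n : ℕ => (n : ℂ)⁻¹ • ∑ k ∈ range n, (T ^ k) v)
      atTop (nhds (E v)) := by
  intro v
  simp_rw [← cesaroMean_apply]
  refine tendsto_apply_of_iSup_eq_top (iSup_maxGenEigenspace_eq_top T) (cesaroMean T) E
    (fun μ w hw ↦ ?_) v
  obtain rfl | hw0 := eq_or_ne w 0
  · simp
  have hev : HasEigenvalue T μ :=
    (hasUnifEigenvalue_iff_hasUnifEigenvalue_one (by simp)).mp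
      ((Submodule.ne_bot_iff _).2 ⟨w, hw, hw0⟩)
  rcases (hdisk μ hev).lt_or_eq with hlt | heq
  · rw [hE0 μ (by rintro rfl; simp at hlt) w hw]
    exact tendsto_cesaroMean_apply (tendsto_pow_apply_of_mem_maxGenEigenspace T hlt hw)
  have hvec : HasEigenvector T μ w := ⟨(hss μ heq).le hw, hw0⟩
  obtain rfl | hμ1 := eq_or_ne μ 1
  · rw [hE1 w hvec.1]
    exact tendsto_cesaroMean_apply (by simp [hvec.pow_apply])
  · rw [hE0 μ hμ1 w hw]
    exact hvec.tendsto_cesaroMean_apply heq.le hμ1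
end

section
/- Let T be a linear operator on a finite-dimensional complex vector space with all eigenvalues in the closed unit disk and with all peripheral eigenvalues (modulus 1) semisimple. Then there exists a strictly increasing sequence of natural numbers (n_j) such that T^{n_j} converges to the spectral projection P onto the sum of the eigenspaces of the peripheral eigenvalues. -/
open Filter

/-- Simultaneous recurrence: powers of finitely many unimodular complex numbers
return arbitrarily close to `1` at arbitrarily late times. -/
lemma aux_near_one (E : Finset ℂ) (hE : ∀ μ ∈ E, ‖μ‖ = 1) {ε : ℝ} (hε : 0 < ε) (N : ℕ) :
    ∃ n : ℕ, N < n ∧ ∀ μ ∈ E, ‖μ ^ n - 1‖ < ε := by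
  classical
  set g : ℕ → (E → ℂ) := fun n μ => (μ : ℂ) ^ (n * (N + 1)) with hgdef
  have hmem : ∀ n, g n ∈ Metric.closedBall (0 : E → ℂ) 1 := by
    intro n
    rw [Metric.mem_closedBall, dist_zero_right]
    refine (pi_norm_le_iff_of_nonneg zero_le_one).2 fun μ => ?_
    rw [hgdef]
    simp only [norm_pow]
    rw [hE μ μ.2, one_pow]
  obtain ⟨x, -, ψ, hψ, hconv⟩ :=
    (isCompact_closedBall (0 : E → ℂ) 1).tendsto_subseq hmem
  rw [Metric.tendsto_atTop] at hconv
  obtain ⟨M, hM⟩ := hconv (ε / 2) (half_pos hε)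
  have hlt : ψ M < ψ (M + 1) := hψ (Nat.lt_succ_self M)
  refine ⟨(ψ (M + 1) - ψ M) * (N + 1), ?_, ?_⟩
  · calc N < N + 1 := Nat.lt_succ_self N
      _ = 1 * (N + 1) := (one_mul _).symm
      _ ≤ (ψ (M + 1) - ψ M) * (N + 1) :=
        Nat.mul_le_mul_right _ (by omega)
  · intro μ hμ
    have hd : dist (g (ψ (M + 1))) (g (ψ M)) < ε := by
      calc dist (g (ψ (M + 1))) (g (ψ M))
          ≤ dist (g (ψ (M + 1))) x + dist (g (ψ M)) x := dist_triangle_right _ _ _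
        _ < ε / 2 + ε / 2 := add_lt_add (hM (M + 1) (Nat.le_succ M)) (hM M le_rfl)
        _ = ε := add_halves ε
    have hcoord : dist (g (ψ (M + 1)) ⟨μ, hμ⟩) (g (ψ M) ⟨μ, hμ⟩) < ε :=
      lt_of_le_of_lt (dist_le_pi_dist _ _ _) hd
    have hnorm1 : ‖(μ : ℂ) ^ (ψ M * (N + 1))‖ = 1 := by
      rw [norm_pow, hE μ hμ, one_pow]
    have key : (μ : ℂ) ^ (ψ M * (N + 1)) * ((μ : ℂ) ^ ((ψ (M + 1) - ψ M) * (N + 1)) - 1)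
        = (μ : ℂ) ^ (ψ (M + 1) * (N + 1)) - (μ : ℂ) ^ (ψ M * (N + 1)) := by
      rw [mul_sub, mul_one, ← pow_add, ← Nat.add_mul, Nat.add_sub_cancel' hlt.le]
    calc ‖(μ : ℂ) ^ ((ψ (M + 1) - ψ M) * (N + 1)) - 1‖
        = ‖(μ : ℂ) ^ (ψ M * (N + 1)) * ((μ : ℂ) ^ ((ψ (M + 1) - ψ M) * (N + 1)) - 1)‖ := by
          rw [norm_mul, hnorm1, one_mul]
      _ = dist (g (ψ (M + 1)) ⟨μ, hμ⟩) (g (ψ M) ⟨μ, hμ⟩) := by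
          rw [key, dist_eq_norm]
      _ < ε := hcoord

/-- There is a strictly monotone sequence along which the powers of all members of a
finite set of unimodular numbers tend to `1`. -/
lemma aux_subseq (E : Finset ℂ) (hE : ∀ μ ∈ E, ‖μ‖ = 1) :
    ∃ φ : ℕ → ℕ, StrictMono φ ∧
      ∀ μ ∈ E, Tendsto (fun j : ℕ => (μ : ℂ) ^ φ j) atTop (nhds 1) := by
  have H : ∀ j N : ℕ, ∃ n, N < n ∧ ∀ μ ∈ E, ‖μ ^ n - 1‖ < 1 / (j + 1) :=
    fun j N => aux_near_one E hE (by positivity) N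
  choose f hf1 hf2 using H
  set φ : ℕ → ℕ := fun j => Nat.rec (f 0 0) (fun j prev => f (j + 1) prev) j with hφdef
  have hstep : ∀ j, φ (j + 1) = f (j + 1) (φ j) := fun j => rfl
  have hmono : StrictMono φ := strictMono_nat_of_lt_succ fun j => by
    rw [hstep]; exact hf1 (j + 1) (φ j)
  have hbound : ∀ j : ℕ, ∀ μ ∈ E, ‖(μ : ℂ) ^ φ j - 1‖ ≤ 1 / (j + 1) := by
    intro j
    cases j with
    | zero => exact fun μ hμ => (hf2 0 0 μ hμ).le
    | succ j =>
      intro μ hμ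
      rw [hstep]
      exact (hf2 (j + 1) (φ j) μ hμ).le
  refine ⟨φ, hmono, fun μ hμ => ?_⟩
  rw [← tendsto_sub_nhds_zero_iff]
  exact squeeze_zero_norm (fun j => hbound j μ hμ)
    tendsto_one_div_add_atTop_nhds_zero_nat

/-- The powers of an endomorphism kill generalized eigenvectors of eigenvalues inside
the open unit disk, in the limit. -/
lemma aux_small {V : Type*} [NormedAddCommGroup V] [NormedSpace ℂ V]
    (T : V →ₗ[ℂ] V) {μ : ℂ} (hμ : ‖μ‖ < 1) {v : V}
    (hv : v ∈ Module.End.maxGenEigenspace T μ) :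
    Tendsto (fun n : ℕ => (T ^ n) v) atTop (nhds 0) := by
  obtain ⟨k, hk⟩ := (Module.End.mem_maxGenEigenspace T μ v).1 hv
  set S : Module.End ℂ V := T - μ • (1 : Module.End ℂ V) with hSdef
  have hvanish : ∀ i, k ≤ i → (S ^ i) v = 0 := by
    intro i hi
    have hpow : S ^ i = S ^ (i - k) * S ^ k := by rw [← pow_add]; congr 1; omega
    rw [hpow, Module.End.mul_apply, hk, map_zero]
  have hexp : ∀ n : ℕ, (T ^ n) v = ∑ i ∈ Finset.range (n + 1),
      ((μ : ℂ) ^ (n - i) * (n.choose i : ℂ)) • ((S ^ i) v) := by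
    intro n
    have hT : T = S + μ • 1 := by rw [hSdef]; abel
    have hcomm : Commute S (μ • (1 : Module.End ℂ V)) :=
      (Commute.one_right S).smul_right μ
    calc (T ^ n) v = ((S + μ • 1) ^ n) v := by rw [← hT]
      _ = (∑ i ∈ Finset.range (n + 1),
            S ^ i * (μ • (1 : Module.End ℂ V)) ^ (n - i) * (n.choose i : Module.End ℂ V)) v := by
          rw [hcomm.add_pow]
      _ = _ := by
          rw [LinearMap.sum_apply]
          refine Finset.sum_congr rfl fun i hi => ?_
          have h1 : (μ • (1 : Module.End ℂ V)) ^ (n - i) = μ ^ (n - i) • 1 := by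
            rw [smul_pow, one_pow]
          rw [h1]
          simp only [Module.End.mul_apply, Module.End.natCast_apply, LinearMap.smul_apply,
            Module.End.one_apply, map_smul, map_nsmul, mul_smul, Nat.cast_smul_eq_nsmul]
          exact smul_comm _ _ _
  have hev : (fun n : ℕ => (T ^ n) v) =ᶠ[atTop]
      (fun n : ℕ => ∑ i ∈ Finset.range k,
        ((μ : ℂ) ^ (n - i) * (n.choose i : ℂ)) • ((S ^ i) v)) := by
    filter_upwards [eventually_ge_atTop k] with n hn
    rw [hexp n]
    symm
    refine Finset.sum_subset (Finset.range_subset_range.2 (by omega)) ?_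
    intro i hi hni
    have hki : k ≤ i := by
      simp only [Finset.mem_range, not_lt] at hni
      exact hni
    rw [hvanish i hki, smul_zero]
  rw [tendsto_congr' hev]
  have h0 : (0 : V) = ∑ i ∈ Finset.range k, (0 : V) := by simp
  rw [h0]
  refine tendsto_finset_sum _ fun i _ => ?_
  have hc : Tendsto (fun n : ℕ => (μ : ℂ) ^ (n - i) * (n.choose i : ℂ)) atTop (nhds 0) := by
    rcases eq_or_ne μ 0 with rfl | hμ0
    · refine Tendsto.congr' ?_ tendsto_const_nhds
      filter_upwards [eventually_ge_atTop (i + 1)] with n hn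
      have : n - i ≠ 0 := by omega
      simp [zero_pow this]
    · have hr0 : (0 : ℝ) < ‖μ‖ := norm_pos_iff.2 hμ0
      have hbig : Tendsto (fun n : ℕ => (‖μ‖ ^ i)⁻¹ * ((n : ℝ) ^ i * ‖μ‖ ^ n))
          atTop (nhds 0) := by
        have := (tendsto_pow_const_mul_const_pow_of_lt_one i (norm_nonneg μ) hμ).const_mul
          ((‖μ‖ ^ i)⁻¹)
        simpa using this
      refine squeeze_zero_norm' ?_ hbig
      filter_upwards [eventually_ge_atTop i] with n hn
      have h1 : ‖(μ : ℂ) ^ (n - i) * (n.choose i : ℂ)‖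
          = ‖μ‖ ^ (n - i) * (n.choose i : ℝ) := by
        rw [norm_mul, norm_pow, Complex.norm_natCast]
      rw [h1, pow_sub₀ _ (norm_ne_zero_iff.2 hμ0) hn]
      have h2 : (n.choose i : ℝ) ≤ (n : ℝ) ^ i := by
        exact_mod_cast Nat.cast_le.2 (Nat.choose_le_pow n i)
      calc ‖μ‖ ^ n * (‖μ‖ ^ i)⁻¹ * (n.choose i : ℝ)
          ≤ ‖μ‖ ^ n * (‖μ‖ ^ i)⁻¹ * (n : ℝ) ^ i := by
            refine mul_le_mul_of_nonneg_left h2 ?_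
            positivity
        _ = (‖μ‖ ^ i)⁻¹ * ((n : ℝ) ^ i * ‖μ‖ ^ n) := by ring
  simpa using hc.smul_const ((S ^ i) v)

/-- If all eigenvalues of `T` lie in the closed unit disk and the peripheral
ones are semisimple, then some subsequence of the powers of `T` converges to
the spectral projection onto the peripheral eigenspaces. -/
theorem stmt_5 {V : Type*} [NormedAddCommGroup V] [NormedSpace ℂ V]
    [FiniteDimensional ℂ V] (T : V →ₗ[ℂ] V)
    (hdisk : ∀ μ : ℂ, Module.End.HasEigenvalue T μ → ‖μ‖ ≤ 1)
    (hss : ∀ μ : ℂ, ‖μ‖ = 1 →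
      Module.End.maxGenEigenspace T μ = Module.End.eigenspace T μ)
    (P : V →ₗ[ℂ] V)
    (hP1 : ∀ μ : ℂ, ‖μ‖ = 1 → ∀ v ∈ Module.End.eigenspace T μ, P v = v)
    (hP0 : ∀ μ : ℂ, ‖μ‖ < 1 → ∀ v ∈ Module.End.maxGenEigenspace T μ, P v = 0) :
    ∃ φ : ℕ → ℕ, StrictMono φ ∧
      ∀ v : V, Tendsto (fun j : ℕ => (T ^ φ j) v) atTop (nhds (P v)) := by
  classical
  set Eset : Finset ℂ :=
    (Module.End.finite_hasEigenvalue T).toFinset.filter (fun μ => ‖μ‖ = 1) with hEdef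
  have hE : ∀ μ ∈ Eset, ‖μ‖ = 1 := fun μ hμ => (Finset.mem_filter.1 hμ).2
  obtain ⟨φ, hmono, hconv⟩ := aux_subseq Eset hE
  refine ⟨φ, hmono, ?_⟩
  set S : Submodule ℂ V :=
    { carrier := {v | Tendsto (fun j : ℕ => (T ^ φ j) v) atTop (nhds (P v))}
      add_mem' := fun {a b} ha hb => by
        simpa only [Set.mem_setOf_eq, map_add] using Tendsto.add ha hb
      zero_mem' := by
        simpa only [Set.mem_setOf_eq, map_zero] using (tendsto_const_nhds :
          Tendsto (fun _ : ℕ => (0 : V)) atTop (nhds 0))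
      smul_mem' := fun c v hv => by
        simpa only [Set.mem_setOf_eq, map_smul] using hv.const_smul c } with hSdef
  intro v
  have htop : (⊤ : Submodule ℂ V) ≤ S := by
    rw [← Module.End.iSup_maxGenEigenspace_eq_top T]
    refine iSup_le fun μ w hw => ?_
    rcases eq_or_ne w 0 with rfl | hw0
    · exact S.zero_mem
    have heig : Module.End.HasEigenvalue T μ := by
      obtain ⟨k, hk⟩ := (Module.End.mem_maxGenEigenspace T μ w).1 hw
      refine Module.End.hasEigenvalue_of_hasGenEigenvalue
        (k := k) ?_
      rw [Module.End.hasGenEigenvalue_iff]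
      intro hbot
      have hwk : w ∈ Module.End.genEigenspace T μ (k : ℕ∞) :=
        Module.End.mem_genEigenspace_nat.2 hk
      rw [hbot] at hwk
      exact hw0 (Submodule.mem_bot ℂ |>.1 hwk)
    rcases lt_or_eq_of_le (hdisk μ heig) with hlt | heq1
    · have h0 : P w = 0 := hP0 μ hlt w hw
      have hT := (aux_small T hlt hw).comp hmono.tendsto_atTop
      show Tendsto (fun j : ℕ => (T ^ φ j) w) atTop (nhds (P w))
      rw [h0]
      exact hT
    · have h1 : ‖μ‖ = 1 := heq1
      have hwe : w ∈ Module.End.eigenspace T μ := by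
        rw [← hss μ h1]; exact hw
      have hTw : ∀ n : ℕ, (T ^ n) w = μ ^ n • w := by
        intro n
        induction n with
        | zero => simp
        | succ n ih =>
          rw [pow_succ, Module.End.mul_apply,
            Module.End.mem_eigenspace_iff.1 hwe, map_smul, ih, smul_smul, ← pow_succ']
      have hPw : P w = w := hP1 μ h1 w hwe
      have hμE : μ ∈ Eset := Finset.mem_filter.2
        ⟨(Set.Finite.mem_toFinset _).2 heig, h1⟩
      show Tendsto (fun j : ℕ => (T ^ φ j) w) atTop (nhds (P w))
      simp only [hTw, hPw]
      simpa using (hconv μ hμE).smul_const w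
  exact htop Submodule.mem_top
end

section
/- Let P : ℂ^n → ℂ^n be a unital positive linear idempotent (P² = P, P(1,…,1) = (1,…,1), P maps entrywise-nonnegative real vectors to entrywise-nonnegative real vectors, and P commutes with complex conjugation). Then the range of P, equipped with the product a ∘ b := P(a·b) (entrywise product), the restricted involution, and unit (1,…,1), is a commutative associative unital *-algebra. -/
/-- Choi–Effros: the range of a unital positive *-preserving idempotent on
`ℂ^n`, with the product `a ∘ b := P (a · b)`, is a commutative associative
unital *-algebra. -/
theorem stmt_15 (n : ℕ) (P : (Fin n → ℂ) →ₗ[ℂ] (Fin n → ℂ))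
    (hidem : P.comp P = P)
    (hPunit : P (fun _ => 1) = fun _ => 1)
    (hPstar : ∀ x : Fin n → ℂ, P (star x) = star (P x))
    (hPpos : ∀ x : Fin n → ℂ, (∀ i, (x i).im = 0 ∧ 0 ≤ (x i).re) →
      ∀ i, (P x i).im = 0 ∧ 0 ≤ (P x i).re) :
    (∀ a ∈ LinearMap.range P, P ((fun _ => 1) * a) = a ∧
        P (a * fun _ => 1) = a) ∧
    (∀ a ∈ LinearMap.range P, ∀ b ∈ LinearMap.range P,
        P (a * b) = P (b * a) ∧ P (a * b) ∈ LinearMap.range P) ∧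
    (∀ a ∈ LinearMap.range P, ∀ b ∈ LinearMap.range P,
      ∀ c ∈ LinearMap.range P, P (P (a * b) * c) = P (a * P (b * c))) ∧
    (∀ a ∈ LinearMap.range P, star a ∈ LinearMap.range P) := by
  classical
  -- fixed points
  have hfix : ∀ a ∈ LinearMap.range P, P a = a := by
    rintro a ⟨x, rfl⟩
    have := congrArg (fun Q => Q x) hidem
    simpa using this
  -- matrix entries
  set q : Fin n → Fin n → ℂ := fun i j => P (Pi.single j 1) i with hq
  have hqpos : ∀ i j, (q i j).im = 0 ∧ 0 ≤ (q i j).re := by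
    intro i j
    exact hPpos (Pi.single j 1)
      (by intro k; by_cases h : k = j <;> simp [Pi.single_apply, h]) i
  -- real parts
  set r : Fin n → Fin n → ℝ := fun i j => (q i j).re with hr
  have hqr : ∀ i j, q i j = (r i j : ℂ) := by
    intro i j
    apply Complex.ext <;> simp [hr, (hqpos i j).1]
  have hr0 : ∀ i j, 0 ≤ r i j := fun i j => (hqpos i j).2
  -- representation
  have hrep : ∀ x : Fin n → ℂ, ∀ i, P x i = ∑ j, x j * q i j := by
    intro x i
    have hx : x = ∑ j, x j • (Pi.single j (1 : ℂ) : Fin n → ℂ) := by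
      ext k
      simp [Pi.single_apply, Finset.sum_apply]
    conv_lhs => rw [hx]
    rw [map_sum]
    simp [hq, Finset.sum_apply]
  -- row sums are 1
  have hrow : ∀ i, ∑ j, r i j = 1 := by
    intro i
    have h1 : P (fun _ => 1) i = (1 : ℂ) := by rw [hPunit]
    rw [hrep] at h1
    have : (∑ j, ((r i j : ℂ))) = 1 := by
      simpa [hqr] using h1
    have := congrArg Complex.re this
    simpa using this
  -- idempotency of the matrix (complex form)
  have hidC : ∀ i k, ∑ j, q j k * q i j = q i k := by
    intro i k
    have h1 : P (P (Pi.single k 1)) = P (Pi.single k 1) := by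
      have := congrArg (fun Q => Q (Pi.single k (1:ℂ))) hidem
      simpa using this
    have h2 : P (P (Pi.single k 1)) i = P (Pi.single k 1) i := congrFun h1 i
    rw [hrep (P (Pi.single k 1)) i] at h2
    exact h2
  have hidR : ∀ i k, ∑ j, r j k * r i j = r i k := by
    intro i k
    have := congrArg Complex.re (hidC i k)
    simpa [hqr, ← Complex.ofReal_mul, ← Complex.ofReal_sum] using this
  -- key lemma: coefficients for fixed points
  have key : ∀ z : Fin n → ℂ, P z = z → ∀ i k,
      ∑ j, z j * q j k * q i j = z k * q i k := by
    intro z hz i k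
    have hzfix : ∀ i', ∑ j, z j * q i' j = z i' := by
      intro i'
      have := congrArg (fun v => v i') hz
      simpa [hrep] using this
    -- S j = ∑ k, r j k * normSq (z k - z j), equals ∑ r j k normSq z k - normSq z j
    set S : Fin n → ℝ := fun j => ∑ m, r j m * Complex.normSq (z m - z j) with hS
    have hS0 : ∀ j, 0 ≤ S j := by
      intro j
      apply Finset.sum_nonneg
      intro m _
      exact mul_nonneg (hr0 j m) (Complex.normSq_nonneg _)
    have hSval : ∀ j, S j = (∑ m, r j m * Complex.normSq (z m)) - Complex.normSq (z j) := by
      intro j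
      have hcross : ∑ m, r j m * (z m * (starRingEnd ℂ) (z j)).re = Complex.normSq (z j) := by
        have h1 : ((∑ m, (r j m : ℂ) * z m) * (starRingEnd ℂ) (z j)).re
            = Complex.normSq (z j) := by
          have : (∑ m, (r j m : ℂ) * z m) = z j := by
            have := hzfix j
            simpa [hqr, mul_comm] using this
          rw [this, Complex.mul_conj]
          simp
        rw [← h1, Finset.sum_mul]
        rw [Complex.re_sum]
        apply Finset.sum_congr rfl
        intro m _
        rw [mul_assoc, Complex.re_ofReal_mul]
      have hexp : ∀ m, Complex.normSq (z m - z j)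
          = Complex.normSq (z m) - 2 * (z m * (starRingEnd ℂ) (z j)).re + Complex.normSq (z j) := by
        intro m
        have := Complex.normSq_sub (z m) (z j)
        linarith [this]
      calc S j = ∑ m, (r j m * Complex.normSq (z m)
            - 2 * (r j m * (z m * (starRingEnd ℂ) (z j)).re) + r j m * Complex.normSq (z j)) := by
            apply Finset.sum_congr rfl
            intro m _
            rw [hexp m]; ring
        _ = (∑ m, r j m * Complex.normSq (z m))
            - 2 * (∑ m, r j m * (z m * (starRingEnd ℂ) (z j)).re)
            + (∑ m, r j m) * Complex.normSq (z j) := by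
            rw [Finset.sum_add_distrib, Finset.sum_sub_distrib, ← Finset.mul_sum,
              Finset.sum_mul]
        _ = (∑ m, r j m * Complex.normSq (z m)) - Complex.normSq (z j) := by
            rw [hcross, hrow]; ring
    -- ∑ j, r i j * S j = 0
    have hsumS : ∑ j, r i j * S j = 0 := by
      have h1 : ∑ j, r i j * S j
          = (∑ j, r i j * ∑ m, r j m * Complex.normSq (z m))
            - ∑ j, r i j * Complex.normSq (z j) := by
        rw [← Finset.sum_sub_distrib]
        apply Finset.sum_congr rfl
        intro j _
        rw [hSval j]; ring
      rw [h1]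
      have h2 : ∑ j, r i j * ∑ m, r j m * Complex.normSq (z m)
          = ∑ m, r i m * Complex.normSq (z m) := by
        calc ∑ j, r i j * ∑ m, r j m * Complex.normSq (z m)
            = ∑ j, ∑ m, r j m * r i j * Complex.normSq (z m) := by
              apply Finset.sum_congr rfl
              intro j _
              rw [Finset.mul_sum]
              apply Finset.sum_congr rfl
              intro m _
              ring
          _ = ∑ m, ∑ j, r j m * r i j * Complex.normSq (z m) := Finset.sum_comm
          _ = ∑ m, r i m * Complex.normSq (z m) := by
              apply Finset.sum_congr rfl
              intro m _
              rw [← Finset.sum_mul, hidR i m]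
      rw [h2]
      ring
    have hterm : ∀ j, r i j * S j = 0 := by
      intro j
      have := (Finset.sum_eq_zero_iff_of_nonneg
        (fun j _ => mul_nonneg (hr0 i j) (hS0 j))).mp hsumS j (Finset.mem_univ j)
      exact this
    -- r i j ≠ 0 → r j m ≠ 0 → z m = z j
    have hconst : ∀ j, r i j ≠ 0 → ∀ m, r j m ≠ 0 → z m = z j := by
      intro j hj m hm
      have hSj : S j = 0 := by
        rcases mul_eq_zero.mp (hterm j) with h | h
        · exact absurd h hj
        · exact h
      have := (Finset.sum_eq_zero_iff_of_nonneg
        (fun m _ => mul_nonneg (hr0 j m) (Complex.normSq_nonneg _))).mp hSj m (Finset.mem_univ m)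
      rcases mul_eq_zero.mp this with h | h
      · exact absurd h hm
      · have := Complex.normSq_eq_zero.mp h
        exact sub_eq_zero.mp this
    -- conclude
    have hstep : ∀ j, z j * q j k * q i j = z k * q j k * q i j := by
      intro j
      by_cases hij : r i j = 0
      · have : q i j = 0 := by rw [hqr, hij]; simp
        rw [this]; ring
      · by_cases hjk : r j k = 0
        · have : q j k = 0 := by rw [hqr, hjk]; simp
          rw [this]; ring
        · rw [hconst j hij k hjk]
    calc ∑ j, z j * q j k * q i j = ∑ j, z k * q j k * q i j := by
          exact Finset.sum_congr rfl (fun j _ => hstep j)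
      _ = z k * ∑ j, q j k * q i j := by rw [Finset.mul_sum]; apply Finset.sum_congr rfl; intro j _; ring
      _ = z k * q i k := by rw [hidC i k]
  -- main multiplicativity lemma
  have L : ∀ z : Fin n → ℂ, P z = z → ∀ y : Fin n → ℂ, P (z * P y) = P (z * y) := by
    intro z hz y
    ext i
    rw [hrep, hrep]
    calc ∑ j, (z * P y) j * q i j
        = ∑ j, ∑ k, z j * (y k * q j k) * q i j := by
          apply Finset.sum_congr rfl
          intro j _
          rw [Pi.mul_apply, hrep y j, Finset.mul_sum, Finset.sum_mul]
      _ = ∑ k, ∑ j, z j * (y k * q j k) * q i j := Finset.sum_comm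
      _ = ∑ k, y k * (z k * q i k) := by
          apply Finset.sum_congr rfl
          intro k _
          rw [← key z hz i k, Finset.mul_sum]
          apply Finset.sum_congr rfl
          intro j _
          ring
      _ = ∑ j, (z * y) j * q i j := by
          apply Finset.sum_congr rfl
          intro j _
          rw [Pi.mul_apply]; ring
  refine ⟨?_, ?_, ?_, ?_⟩
  · intro a ha
    have h1 : ((fun _ => 1) : Fin n → ℂ) * a = a := by ext i; simp
    have h2 : (a * fun _ => (1 : ℂ)) = a := by ext i; simp
    exact ⟨by rw [h1]; exact hfix a ha, by rw [h2]; exact hfix a ha⟩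
  · intro a _ b _
    exact ⟨by rw [mul_comm], ⟨a * b, rfl⟩⟩
  · intro a ha b hb c hc
    have h1 : P (P (a * b) * c) = P (c * P (a * b)) := by rw [mul_comm]
    have h2 : P (c * P (a * b)) = P (c * (a * b)) := L c (hfix c hc) (a * b)
    have h3 : c * (a * b) = a * (b * c) := by ring
    have h4 : P (a * P (b * c)) = P (a * (b * c)) := L a (hfix a ha) (b * c)
    rw [h1, h2, h3, h4]
  · rintro a ⟨x, rfl⟩
    exact ⟨star x, hPstar x⟩
end
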